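/- arXiv:1809.01637 — 3 statements merged into one kernel-verified Lean document; each statement's English description precedes it below -/
import Mathlib

section
/- Consider the R-linear maps g : R² → R defined by g(r,s) = V·r + Q·s, and h : R² → R² defined by h(a,b) = (Q·a, V·a + Q²·b). Then ker(g) = range(h). -/
open Polynomial CategoryTheory

noncomputable section

/-- The field `F = ℤ/2ℤ`. -/
abbrev Fld := ZMod 2

/-- The polynomial ring `F[[V]][Q]` (polynomials in `Q` over the power series ring `F[[V]]`). -/
abbrev Rpoly := Polynomial (PowerSeries Fld)

/-- The ring `R = F[[V]][Q]/(Q³)`. -/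
abbrev Rring := Rpoly ⧸ Ideal.span ({(X : Rpoly) ^ 3} : Set Rpoly)

/-- `Q`, the image in `R` of the polynomial variable. -/
def Qe : Rring := Ideal.Quotient.mk (Ideal.span ({(X : Rpoly) ^ 3} : Set Rpoly)) (X : Rpoly)

/-- `V`, the image in `R` of the power series variable. -/
def Ve : Rring := Ideal.Quotient.mk (Ideal.span ({(X : Rpoly) ^ 3} : Set Rpoly)) (C PowerSeries.X)

/-- `g(r,s) = V·r + Q·s`. -/
def gmap : (Rring × Rring) →ₗ[Rring] Rring where
  toFun p := Ve * p.1 + Qe * p.2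
  map_add' p q := by simp; ring
  map_smul' r p := by simp [smul_eq_mul]; ring

/-- `h(a,b) = (Q·a, V·a + Q²·b)`. -/
def hmap : (Rring × Rring) →ₗ[Rring] (Rring × Rring) where
  toFun p := (Qe * p.1, Ve * p.1 + Qe ^ 2 * p.2)
  map_add' p q := by simp [Prod.ext_iff]; constructor <;> ring
  map_smul' r p := by simp [Prod.ext_iff, smul_eq_mul]; constructor <;> ring

/-! Write `r, s ∈ A[X]/(X³)` as classes of polynomials `p, q`. Then `v r + X s = 0` says that
the coefficients of `v p + X q` in degrees `0, 1, 2` vanish: `v p₀ = 0`, `q₀ = -v p₁`,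
`q₁ = -v p₂`. As `v` is a non-zero-divisor, `p₀ = 0`, so `r = X (p₁ + p₂ X)`, and since the
signs disappear in characteristic 2, `s = v (p₁ + p₂ X) + X² q₂`. Conversely
`v X a + X (v a + X² b) = 2 v X a + X³ b = 0`. -/

instance PowerSeries.instCharP {R : Type*} [Semiring R] (p : ℕ) [CharP R p] :
    CharP (PowerSeries R) p :=
  charP_of_injective_ringHom PowerSeries.C_injective p

namespace Polynomial

variable {A : Type*} [CommRing A]

theorem mk_span_X_pow_eq_mk_iff {n : ℕ} {p q : A[X]} :
    Ideal.Quotient.mk (Ideal.span {X ^ n}) p = Ideal.Quotient.mk (Ideal.span {X ^ n}) q ↔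
      ∀ d < n, p.coeff d = q.coeff d := by
  simp only [Ideal.Quotient.mk_eq_mk_iff_sub_mem, Ideal.mem_span_singleton, X_pow_dvd_iff,
    coeff_sub, sub_eq_zero]

section TruncatedCubic

variable [CharP A 2] {v : A}

local notation "π" => Ideal.Quotient.mk (Ideal.span {(X : A[X]) ^ 3})

theorem mk_C_mul_add_mk_X_mul_eq_zero_iff (hv : v ∈ nonZeroDivisors A)
    (r s : A[X] ⧸ Ideal.span {(X : A[X]) ^ 3}) :
    π (C v) * r + π X * s = 0 ↔ ∃ a b, π X * a = r ∧ π (C v) * a + π X ^ 2 * b = s := by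
  constructor
  · intro h
    obtain ⟨p, rfl⟩ := Ideal.Quotient.mk_surjective r
    obtain ⟨q, rfl⟩ := Ideal.Quotient.mk_surjective s
    rw [← map_mul, ← map_mul, ← map_add, ← map_zero π, mk_span_X_pow_eq_mk_iff] at h
    have hc0 := h 0 (by norm_num)
    have hc1 := h 1 (by norm_num)
    have hc2 := h 2 (by norm_num)
    simp only [coeff_add, coeff_C_mul, coeff_X_mul, coeff_X_mul_zero, coeff_zero, add_zero,
      CharTwo.add_eq_zero] at hc0 hc1 hc2
    have hp0 : p.coeff 0 = 0 := (mul_left_mem_nonZeroDivisors_eq_zero_iff hv).1 hc0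
    refine ⟨π (C (p.coeff 1) + C (p.coeff 2) * X), π (C (q.coeff 2)), ?_, ?_⟩
    · rw [← map_mul, mk_span_X_pow_eq_mk_iff]
      intro d hd
      interval_cases d <;> simp [hp0]
    · rw [← map_mul, ← map_pow, ← map_mul, ← map_add, mk_span_X_pow_eq_mk_iff]
      intro d hd
      interval_cases d <;> simp [coeff_X_pow, hc1, hc2]
  · rintro ⟨a, b, rfl, rfl⟩
    have htwo : (2 : A[X] ⧸ Ideal.span {(X : A[X]) ^ 3}) = 0 := by
      rw [← map_ofNat (algebraMap A _) 2, CharTwo.two_eq_zero, map_zero]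
    have hX : π X ^ 3 = 0 := by
      rw [← map_pow, Ideal.Quotient.eq_zero_iff_mem]
      exact Ideal.subset_span rfl
    linear_combination (π (C v) * π X * a) * htwo + b * hX

end TruncatedCubic

end Polynomial

/-- `ker g = range h`. -/
theorem stmt3 : LinearMap.ker gmap = LinearMap.range hmap := by
  ext ⟨r, s⟩
  simp only [LinearMap.mem_ker, LinearMap.mem_range, gmap, hmap, LinearMap.coe_mk,
    AddHom.coe_mk, Prod.ext_iff, Prod.exists]
  exact mk_C_mul_add_mk_X_mul_eq_zero_iff
    (mem_nonZeroDivisors_of_ne_zero PowerSeries.X_ne_zero) r s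
end
end

section
/- Consider the R-linear maps h : R² → R² defined by h(a,b) = (Q·a, V·a + Q²·b), and k : R² → R² defined by k(x,y) = (Q²·x, V·x + Q·y). Then ker(h) = range(k) and ker(k) = range(h); in particular the two maps compose to zero in either order and form a 2-periodic exact sequence of free R-modules. -/
open Polynomial CategoryTheory

noncomputable section

/-- `k(x,y) = (Q²·x, V·x + Q·y)`. -/
def kmap : (Rring × Rring) →ₗ[Rring] (Rring × Rring) where
  toFun p := (Qe ^ 2 * p.1, Ve * p.1 + Qe * p.2)
  map_add' p q := by simp [Prod.ext_iff]; constructor <;> ring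
  map_smul' r p := by simp [Prod.ext_iff, smul_eq_mul]; constructor <;> ring


lemma Q3 : Qe ^ 3 = 0 := by
  rw [Qe, ← map_pow, Ideal.Quotient.eq_zero_iff_mem]
  exact Ideal.subset_span rfl

lemma two_zero : (2 : Rring) = 0 := by
  have h := map_natCast (algebraMap Fld Rring) 2
  have h2 : ((2:ℕ) : Fld) = 0 := by decide
  rw [h2, map_zero] at h
  exact_mod_cast h.symm

lemma kerQ {z : Rring} (h : Qe * z = 0) : ∃ c, z = Qe ^ 2 * c := by
  obtain ⟨p, rfl⟩ := Ideal.Quotient.mk_surjective z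
  have hm : (X : Rpoly) * p ∈ Ideal.span ({(X:Rpoly)^3} : Set Rpoly) := by
    rw [← Ideal.Quotient.eq_zero_iff_mem, map_mul]
    exact h
  rw [Ideal.mem_span_singleton] at hm
  obtain ⟨q, hq⟩ := hm
  refine ⟨Ideal.Quotient.mk _ q, ?_⟩
  have hp : p = X^2 * q := by
    apply mul_left_cancel₀ (X_ne_zero (R := PowerSeries Fld))
    rw [hq]; ring
  rw [hp, Qe, ← map_pow, ← map_mul]

lemma kerQ2 {z : Rring} (h : Qe ^ 2 * z = 0) : ∃ c, z = Qe * c := by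
  obtain ⟨p, rfl⟩ := Ideal.Quotient.mk_surjective z
  have hm : (X : Rpoly)^2 * p ∈ Ideal.span ({(X:Rpoly)^3} : Set Rpoly) := by
    rw [← Ideal.Quotient.eq_zero_iff_mem, map_mul, map_pow]
    exact h
  rw [Ideal.mem_span_singleton] at hm
  obtain ⟨q, hq⟩ := hm
  refine ⟨Ideal.Quotient.mk _ q, ?_⟩
  have hp : p = X * q := by
    apply mul_left_cancel₀ (pow_ne_zero 2 (X_ne_zero (R := PowerSeries Fld)))
    rw [hq]; ring
  rw [hp, Qe, ← map_mul]

lemma hmap_apply (p : Rring × Rring) : hmap p = (Qe * p.1, Ve * p.1 + Qe ^ 2 * p.2) := rfl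
lemma kmap_apply (p : Rring × Rring) : kmap p = (Qe ^ 2 * p.1, Ve * p.1 + Qe * p.2) := rfl

/-- `ker h = range k` and `ker k = range h`; in particular the two maps compose to
zero in either order, forming a 2-periodic exact sequence of free `R`-modules. -/
theorem stmt4 :
    LinearMap.ker hmap = LinearMap.range kmap ∧
    LinearMap.ker kmap = LinearMap.range hmap ∧
    hmap ∘ₗ kmap = 0 ∧ kmap ∘ₗ hmap = 0 := by
  have hk : hmap ∘ₗ kmap = 0 := by
    apply LinearMap.ext
    intro p
    rw [LinearMap.comp_apply, kmap_apply, hmap_apply, LinearMap.zero_apply]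
    apply Prod.ext
    · show Qe * (Qe ^ 2 * p.1) = 0
      linear_combination p.1 * Q3
    · show Ve * (Qe ^ 2 * p.1) + Qe ^ 2 * (Ve * p.1 + Qe * p.2) = 0
      linear_combination Ve * Qe ^ 2 * p.1 * two_zero + p.2 * Q3
  have kh : kmap ∘ₗ hmap = 0 := by
    apply LinearMap.ext
    intro p
    rw [LinearMap.comp_apply, hmap_apply, kmap_apply, LinearMap.zero_apply]
    apply Prod.ext
    · show Qe ^ 2 * (Qe * p.1) = 0
      linear_combination p.1 * Q3
    · show Ve * (Qe * p.1) + Qe * (Ve * p.1 + Qe ^ 2 * p.2) = 0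
      linear_combination Ve * Qe * p.1 * two_zero + p.2 * Q3
  refine ⟨?_, ?_, hk, kh⟩
  · apply le_antisymm
    · rintro ⟨a, b⟩ hp
      simp only [LinearMap.mem_ker, hmap_apply, Prod.ext_iff, Prod.fst_zero, Prod.snd_zero] at hp
      obtain ⟨h1, h2⟩ := hp
      obtain ⟨x, rfl⟩ := kerQ h1
      have h3 : Qe ^ 2 * (Ve * x + b) = 0 := by linear_combination h2
      obtain ⟨y, hy⟩ := kerQ2 h3
      refine ⟨(x, y), ?_⟩
      rw [kmap_apply, Prod.mk.injEq]
      exact ⟨rfl, by linear_combination -hy + Ve * x * two_zero⟩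
    · rintro p ⟨q, rfl⟩
      rw [LinearMap.mem_ker, ← LinearMap.comp_apply, hk, LinearMap.zero_apply]
  · apply le_antisymm
    · rintro ⟨a, b⟩ hp
      simp only [LinearMap.mem_ker, kmap_apply, Prod.ext_iff, Prod.fst_zero, Prod.snd_zero] at hp
      obtain ⟨h1, h2⟩ := hp
      obtain ⟨x, rfl⟩ := kerQ2 h1
      have h3 : Qe * (Ve * x + b) = 0 := by linear_combination h2
      obtain ⟨y, hy⟩ := kerQ h3
      refine ⟨(x, y), ?_⟩
      rw [hmap_apply, Prod.mk.injEq]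
      exact ⟨rfl, by linear_combination -hy + Ve * x * two_zero⟩
    · rintro p ⟨q, rfl⟩
      rw [LinearMap.mem_ker, ← LinearMap.comp_apply, kh, LinearMap.zero_apply]
end
end

section
/- Let M be an R-module and let F = R/m be the residue field of R, regarded as an R-module. Then Tor_3^R(M, F) is isomorphic, as an F-vector space, to the quotient K/I, where K = {(x, y) ∈ M × M : Q²·x = 0 and V·x + Q·y = 0} and I = {(Q·a, V·a + Q²·b) : a, b ∈ M}. -/
/-!
The residue field has the 2-periodic free resolution
`⋯ → R² --A--> R² --B--> R² --A--> R² --(V Q)--> R → F`, where `A(x, y) = (Q x, V x + Q² y)` and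
`B(x, y) = (Q² x, V x + Q y)`. The compositions vanish because `Q³ = 0` and `2 = 0` in `R`.
Exactness comes down to `ann Q = (Q²)` and `ann Q² = (Q)`, which hold because `Q` lifts to a
nonzerodivisor of `F[[V]][Q]`, and, in degree one, to `Q ∣ V a → Q ∣ a`, which holds because `V`
is a nonzerodivisor of `F[[V]]`. Tensoring with `M` turns degrees `4 → 3 → 2` into
`M² --A--> M² --B--> M²`, whose homology is `K / I`.
-/

open Polynomial CategoryTheory

noncomputable section

/-- The maximal ideal `m = (Q, V)` of `R`. -/
def mIdeal : Ideal Rring := Ideal.span {Qe, Ve}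

/-- The residue field `F = R/m`, regarded as an `R`-module. -/
def resF : ModuleCat Rring := ModuleCat.of Rring (Rring ⧸ mIdeal)

/-- Scalars commute with themselves: needed to form `R`-scalar multiples of linear maps. -/
instance (M : Type) [AddCommGroup M] [Module Rring M] : SMulCommClass Rring Rring M :=
  smulCommClass_self Rring M

/-- `K = {(x, y) ∈ M × M : Q²·x = 0 and V·x + Q·y = 0}`. -/
def Ksub (M : Type) [AddCommGroup M] [Module Rring M] : Submodule Rring (M × M) :=
  LinearMap.ker (LinearMap.prod ((Qe ^ 2) • LinearMap.fst Rring M M)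
    (Ve • LinearMap.fst Rring M M + Qe • LinearMap.snd Rring M M))

/-- `I = {(Q·a, V·a + Q²·b) : a, b ∈ M}`. -/
def Isub (M : Type) [AddCommGroup M] [Module Rring M] : Submodule Rring (M × M) :=
  LinearMap.range (LinearMap.prod (Qe • LinearMap.fst Rring M M)
    (Ve • LinearMap.fst Rring M M + (Qe ^ 2) • LinearMap.snd Rring M M))

/-- Instance search no longer finds `CommRing Rring` through the abbreviations; give Mathlib's own. -/
instance : CommRing Rring := @Ideal.Quotient.commRing Rpoly Polynomial.commRing _

namespace Rring

lemma Qe_pow_three : Qe ^ 3 = 0 := by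
  rw [Qe, ← map_pow, Ideal.Quotient.eq_zero_iff_mem]
  exact Ideal.subset_span rfl

lemma two_eq_zero : (2 : Rring) = 0 := by
  rw [← map_ofNat (algebraMap Fld Rring) 2]
  exact map_zero _

lemma Qe_pow_dvd_of_Qe_pow_mul_eq_zero {i j : ℕ} (hij : i + j = 3) {a : Rring}
    (h : Qe ^ j * a = 0) : Qe ^ i ∣ a := by
  obtain ⟨p, rfl⟩ := Ideal.Quotient.mk_surjective a
  rw [Qe, ← map_pow, ← map_mul, Ideal.Quotient.eq_zero_iff_mem, Ideal.mem_span_singleton,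
    ← hij, pow_add, mul_comm, (isRegular_X_pow j).left.dvd_cancel_left] at h
  obtain ⟨c, rfl⟩ := h
  exact ⟨Ideal.Quotient.mk _ c, by rw [Qe, map_mul, map_pow]⟩

lemma Qe_sq_dvd_of_Qe_mul_eq_zero {a : Rring} (h : Qe * a = 0) : Qe ^ 2 ∣ a :=
  Qe_pow_dvd_of_Qe_pow_mul_eq_zero (j := 1) rfl (by rwa [pow_one])

lemma Qe_dvd_of_Qe_sq_mul_eq_zero {a : Rring} (h : Qe ^ 2 * a = 0) : Qe ∣ a :=
  pow_one Qe ▸ Qe_pow_dvd_of_Qe_pow_mul_eq_zero rfl h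

lemma Qe_dvd_of_Qe_dvd_Ve_mul {a : Rring} (h : Qe ∣ Ve * a) : Qe ∣ a := by
  obtain ⟨p, rfl⟩ := Ideal.Quotient.mk_surjective a
  obtain ⟨b, hb⟩ := h
  obtain ⟨q, rfl⟩ := Ideal.Quotient.mk_surjective b
  rw [Qe, Ve, ← map_mul, ← map_mul, Ideal.Quotient.eq, Ideal.mem_span_singleton] at hb
  have hX : (X : Rpoly) ∣ C PowerSeries.X * p :=
    (dvd_sub_left (dvd_mul_right X q)).mp ((dvd_pow_self X three_ne_zero).trans hb)
  rw [X_dvd_iff, coeff_C_mul, mul_eq_zero, or_iff_right PowerSeries.X_ne_zero, ← X_dvd_iff] at hX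
  obtain ⟨c, rfl⟩ := hX
  exact ⟨Ideal.Quotient.mk _ c, by rw [Qe, map_mul]⟩

section PeriodicDiff

variable (q r : Rring) (N : Type) [AddCommGroup N] [Module Rring N]

def periodicDiff : N × N →ₗ[Rring] N × N :=
  (q • LinearMap.fst Rring N N).prod (Ve • LinearMap.fst Rring N N + r • LinearMap.snd Rring N N)

variable {q r N}

@[simp]
lemma periodicDiff_apply (x : N × N) : periodicDiff q r N x = (q • x.1, Ve • x.1 + r • x.2) := rfl

lemma periodicDiff_comp_periodicDiff (h : q * r = 0) :
    periodicDiff r q N ∘ₗ periodicDiff q r N = 0 := by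
  refine LinearMap.ext fun x => Prod.ext ?_ ?_
  · simp [smul_smul, mul_comm r q, h]
  · simp only [LinearMap.comp_apply, periodicDiff_apply, smul_add, smul_smul, h, zero_smul,
      add_zero, LinearMap.zero_apply, Prod.snd_zero]
    rw [← add_smul, mul_comm q Ve, ← two_mul, two_eq_zero, zero_mul, zero_smul]

lemma ker_periodicDiff_le_range (hq : ∀ a, q * a = 0 → r ∣ a) (hr : ∀ a, r * a = 0 → q ∣ a) :
    LinearMap.ker (periodicDiff r q Rring) ≤ LinearMap.range (periodicDiff q r Rring) := by
  rintro ⟨a, b⟩ hab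
  simp only [LinearMap.mem_ker, periodicDiff_apply, smul_eq_mul, Prod.mk_eq_zero] at hab
  obtain ⟨c, rfl⟩ := hr a hab.1
  obtain ⟨d, hd⟩ := hq (Ve * c + b) (by linear_combination hab.2)
  exact ⟨(c, d), by
    simp only [periodicDiff_apply, smul_eq_mul, Prod.mk.injEq, true_and]
    linear_combination -hd + Ve * c * two_eq_zero⟩

end PeriodicDiff

def firstDiff : Rring × Rring →ₗ[Rring] Rring :=
  Ve • LinearMap.fst Rring Rring Rring + Qe • LinearMap.snd Rring Rring Rring

lemma firstDiff_apply (x : Rring × Rring) : firstDiff x = Ve * x.1 + Qe * x.2 := rfl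

lemma range_firstDiff : LinearMap.range firstDiff = mIdeal := by
  ext x
  rw [LinearMap.mem_range, mIdeal, Ideal.mem_span_pair]
  constructor
  · rintro ⟨⟨a, b⟩, rfl⟩
    exact ⟨b, a, by rw [firstDiff_apply]; ring⟩
  · rintro ⟨a, b, rfl⟩
    exact ⟨(b, a), by rw [firstDiff_apply]; ring⟩

lemma mkQ_comp_firstDiff : mIdeal.mkQ ∘ₗ firstDiff = 0 :=
  LinearMap.range_le_ker_iff.mp (by rw [range_firstDiff, Submodule.ker_mkQ])

lemma firstDiff_comp_periodicDiff : firstDiff ∘ₗ periodicDiff Qe (Qe ^ 2) Rring = 0 := by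
  refine LinearMap.ext fun x => ?_
  simp only [LinearMap.comp_apply, periodicDiff_apply, firstDiff_apply, smul_eq_mul,
    LinearMap.zero_apply]
  linear_combination (Ve * Qe * x.1) * two_eq_zero + x.2 * Qe_pow_three

open ModuleCat in
/-- The resolution above degree zero, shifted down by one degree. -/
def periodicComplex : ChainComplex (ModuleCat Rring) ℕ :=
  HomologicalComplex.alternatingConst (of Rring (Rring × Rring))
    (φ := ofHom (periodicDiff (Qe ^ 2) Qe Rring)) (ψ := ofHom (periodicDiff Qe (Qe ^ 2) Rring))
    (by rw [← ofHom_comp, periodicDiff_comp_periodicDiff (by rw [← pow_succ, Qe_pow_three]),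
      ofHom_zero])
    (by rw [← ofHom_comp, periodicDiff_comp_periodicDiff (by rw [← pow_succ', Qe_pow_three]),
      ofHom_zero])
    fun _ _ => ComplexShape.down_nat_odd_add

lemma periodicComplex_d (n : ℕ) :
    periodicComplex.d (n + 1) n = if Even n then ModuleCat.ofHom (periodicDiff Qe (Qe ^ 2) Rring)
      else ModuleCat.ofHom (periodicDiff (Qe ^ 2) Qe Rring) := by
  simp only [periodicComplex, HomologicalComplex.alternatingConst_d, ComplexShape.down_Rel,
    Nat.even_add_one, if_true, ite_not]
  rfl

open ModuleCat in
def resolutionComplex : ChainComplex (ModuleCat Rring) ℕ :=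
  periodicComplex.augment (ofHom firstDiff) (by
    rw [periodicComplex_d, if_pos Even.zero]
    exact ModuleCat.hom_ext firstDiff_comp_periodicDiff)

instance (n : ℕ) : Projective (resolutionComplex.X n) := by
  cases n
  exacts [inferInstanceAs (Projective (ModuleCat.of Rring Rring)),
    inferInstanceAs (Projective (ModuleCat.of Rring (Rring × Rring)))]

lemma ker_firstDiff_le_range :
    LinearMap.ker firstDiff ≤ LinearMap.range (periodicDiff Qe (Qe ^ 2) Rring) := by
  rintro ⟨a, b⟩ hab
  rw [LinearMap.mem_ker, firstDiff_apply] at hab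
  obtain ⟨c, rfl⟩ := Qe_dvd_of_Qe_dvd_Ve_mul (a := a) ⟨-b, by linear_combination hab⟩
  refine ker_periodicDiff_le_range (fun _ => Qe_sq_dvd_of_Qe_mul_eq_zero)
    (fun _ => Qe_dvd_of_Qe_sq_mul_eq_zero) ?_
  simp only [LinearMap.mem_ker, periodicDiff_apply, smul_eq_mul, Prod.mk_eq_zero]
  exact ⟨by linear_combination c * Qe_pow_three, hab⟩

lemma resolutionComplex_exactAt_one : resolutionComplex.ExactAt 1 := by
  rw [HomologicalComplex.exactAt_iff' _ 2 1 0 (by simp) (by simp),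
    ShortComplex.moduleCat_exact_iff_ker_sub_range]
  exact ker_firstDiff_le_range

lemma resolutionComplex_exactAt_add_two (n : ℕ) : resolutionComplex.ExactAt (n + 2) := by
  rw [HomologicalComplex.exactAt_iff' _ (n + 3) (n + 2) (n + 1) (by simp) (by simp),
    ShortComplex.moduleCat_exact_iff_ker_sub_range]
  change LinearMap.ker (periodicComplex.d (n + 1) n).hom ≤
    LinearMap.range (periodicComplex.d (n + 1 + 1) (n + 1)).hom
  by_cases hn : Even n
  · simp only [periodicComplex_d, Nat.even_add_one, hn, if_true, not_true_eq_false, if_false]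
    exact ker_periodicDiff_le_range (fun _ => Qe_dvd_of_Qe_sq_mul_eq_zero)
      (fun _ => Qe_sq_dvd_of_Qe_mul_eq_zero)
  · simp only [periodicComplex_d, Nat.even_add_one, hn, if_false, not_false_eq_true, if_true]
    exact ker_periodicDiff_le_range (fun _ => Qe_sq_dvd_of_Qe_mul_eq_zero)
      (fun _ => Qe_dvd_of_Qe_sq_mul_eq_zero)

def resolution : ProjectiveResolution resF where
  complex := resolutionComplex
  π := (ChainComplex.toSingle₀Equiv _ _).symm ⟨ModuleCat.ofHom mIdeal.mkQ,
    ModuleCat.hom_ext mkQ_comp_firstDiff⟩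
  quasiIso := ⟨fun n => by
    rcases n with _ | _ | n
    · rw [ChainComplex.quasiIsoAt₀_iff, ShortComplex.quasiIso_iff_of_zeros' _ rfl rfl rfl]
      constructor
      · rw [ShortComplex.moduleCat_exact_iff_ker_sub_range]
        change LinearMap.ker mIdeal.mkQ ≤ LinearMap.range firstDiff
        rw [Submodule.ker_mkQ, range_firstDiff]
      · change Epi (ModuleCat.ofHom mIdeal.mkQ)
        exact (ModuleCat.epi_iff_surjective _).mpr mIdeal.mkQ_surjective
    · rw [quasiIsoAt_iff_exactAt' (hL := ChainComplex.exactAt_succ_single_obj ..)]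
      exact resolutionComplex_exactAt_one
    · rw [quasiIsoAt_iff_exactAt' (hL := ChainComplex.exactAt_succ_single_obj ..)]
      exact resolutionComplex_exactAt_add_two n⟩

lemma resolution_d_four_three :
    resolution.complex.d 4 3 = ModuleCat.ofHom (periodicDiff Qe (Qe ^ 2) Rring) := by
  change periodicComplex.d (2 + 1) 2 = _
  rw [periodicComplex_d, if_pos even_two]

lemma resolution_d_three_two :
    resolution.complex.d 3 2 = ModuleCat.ofHom (periodicDiff (Qe ^ 2) Qe Rring) := by
  change periodicComplex.d (1 + 1) 1 = _
  rw [periodicComplex_d, if_neg Nat.not_even_one]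

section Tor

open MonoidalCategory TensorProduct

variable (M : Type) [AddCommGroup M] [Module Rring M]

def tensorProdEquiv : M ⊗[Rring] (Rring × Rring) ≃ₗ[Rring] M × M :=
  (TensorProduct.prodRight Rring Rring M Rring Rring).trans
    ((TensorProduct.rid Rring M).prodCongr (TensorProduct.rid Rring M))

variable {M}

lemma tensorProdEquiv_comp_lTensor (q r : Rring) :
    (tensorProdEquiv M).toLinearMap ∘ₗ (periodicDiff q r Rring).lTensor M =
      periodicDiff q r M ∘ₗ (tensorProdEquiv M).toLinearMap := by
  refine TensorProduct.ext' fun x ⟨a, b⟩ => ?_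
  simp [tensorProdEquiv, mul_smul, add_smul]

variable (M)

def torShortComplex : ShortComplex (ModuleCat Rring) :=
  ShortComplex.mk (ModuleCat.ofHom (periodicDiff Qe (Qe ^ 2) M))
    (ModuleCat.ofHom (periodicDiff (Qe ^ 2) Qe M))
    (ModuleCat.hom_ext (periodicDiff_comp_periodicDiff (by rw [← pow_succ', Qe_pow_three])))

def tensorResolutionScIso :
    ((((tensoringLeft _).obj (ModuleCat.of Rring M)).mapHomologicalComplex _).obj
      resolution.complex).sc' 4 3 2 ≅ torShortComplex M :=
  ShortComplex.isoMk (tensorProdEquiv M).toModuleIso (tensorProdEquiv M).toModuleIso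
    (tensorProdEquiv M).toModuleIso
    (ModuleCat.hom_ext <| by
      change _ = (tensorProdEquiv M).toLinearMap ∘ₗ (resolution.complex.d 4 3).hom.lTensor M
      rw [resolution_d_four_three]
      exact (tensorProdEquiv_comp_lTensor _ _).symm)
    (ModuleCat.hom_ext <| by
      change _ = (tensorProdEquiv M).toLinearMap ∘ₗ (resolution.complex.d 3 2).hom.lTensor M
      rw [resolution_d_three_two]
      exact (tensorProdEquiv_comp_lTensor _ _).symm)

def torThreeIso :
    ((Tor (ModuleCat Rring) 3).obj (ModuleCat.of Rring M)).obj resF ≅ (torShortComplex M).homology :=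
  resolution.isoLeftDerivedObj _ 3 ≪≫
    HomologicalComplex.homologyIsoSc' _ 4 3 2 (by simp) (by simp) ≪≫
    ShortComplex.homologyMapIso (tensorResolutionScIso M)

end Tor

end Rring

/-- `Tor₃^R(M, F)` is isomorphic, as an `F`-vector space, to `K/I`. -/
theorem stmt8 (M : Type) [AddCommGroup M] [Module Rring M] :
    Nonempty ((((Tor (ModuleCat Rring) 3).obj (ModuleCat.of Rring M)).obj resF) ≃+
      (↥(Ksub M) ⧸ Submodule.comap (Ksub M).subtype (Isub M))) :=
  ⟨((Rring.torThreeIso M ≪≫ (Rring.torShortComplex M).moduleCatHomologyIso).toLinearEquiv ≪≫ₗ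
    Submodule.quotEquivOfEq _ _ (LinearMap.range_codRestrict _ _ _)).toAddEquiv⟩
end
end
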